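/- Let L > 0, let r ∈ ℝ³ with ‖r‖₂ = 1, and let m : [0,L] → ℝ³ be twice continuously differentiable with m'(0) = m'(L) = 0. Then ∫₀ᴸ (r × m(x)) · (m(x) × m''(x)) dx ≤ 2L² ∫₀ᴸ ‖m'(x)‖₂² dx + (1/2) ∫₀ᴸ ‖m(x) × m''(x)‖₂² dx. (The cross-term estimate from the proof of the paper's Theorem 3.7, combining integration by parts, Cauchy–Schwarz, the Poincaré-type inequality for cross products, Young's inequality, and the bound ‖r × v‖₂ ≤ ‖v‖₂; the paper records the weaker constant 8L⁴ in place of 2L².) -/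

import Mathlib

/-!
Put `F = m × m'`. Then `F' = m × m''` because `m' × m' = 0`, and `F` vanishes at both ends, so
integrating by parts against `r × m` turns the left-hand side into `-∫ (r × m') · F`, which is at most
`∫ ‖m'‖ ‖F‖`. Young's inequality with weight `L²` bounds this by
`(L²/2) ∫ ‖m'‖² + (1/(2L²)) ∫ ‖F‖²`, and the Poincaré inequality `∫ ‖F‖² ≤ L² ∫ ‖F'‖²`, which
follows from `F(0) = 0` and Cauchy–Schwarz, finishes the estimate.
-/

open RealInnerProductSpace

/-- Cross product on `ℝ³ = EuclideanSpace ℝ (Fin 3)`. -/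
noncomputable def cross3 (u v : EuclideanSpace ℝ (Fin 3)) : EuclideanSpace ℝ (Fin 3) :=
  (WithLp.equiv 2 (Fin 3 → ℝ)).symm
    ![u 1 * v 2 - u 2 * v 1, u 2 * v 0 - u 0 * v 2, u 0 * v 1 - u 1 * v 0]

open Set intervalIntegral WithLp Matrix
open scoped Interval

local notation "E3" => EuclideanSpace ℝ (Fin 3)

theorem cross3_eq_toLp_crossProduct (u v : E3) : cross3 u v = toLp 2 (ofLp u ⨯₃ ofLp v) := by
  simp [cross3, cross_apply]

@[simp]
theorem cross3_self (v : E3) : cross3 v v = 0 := by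
  simp [cross3_eq_toLp_crossProduct]

@[simp]
theorem cross3_zero_left (v : E3) : cross3 0 v = 0 := by
  simp [cross3_eq_toLp_crossProduct]

@[simp]
theorem cross3_zero_right (v : E3) : cross3 v 0 = 0 := by
  simp [cross3_eq_toLp_crossProduct]

theorem norm_cross3_le (u v : E3) : ‖cross3 u v‖ ≤ ‖u‖ * ‖v‖ := by
  rw [cross3_eq_toLp_crossProduct, InnerProductGeometry.norm_ofLp_crossProduct]
  exact mul_le_of_le_one_right (by positivity) (Real.sin_le_one _)

theorem abs_inner_cross3_le (u v w : E3) : |⟪cross3 u v, w⟫| ≤ ‖u‖ * (‖v‖ * ‖w‖) :=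
  (abs_real_inner_le_norm _ _).trans <|
    (mul_le_mul_of_nonneg_right (norm_cross3_le u v) (norm_nonneg w)).trans_eq (mul_assoc _ _ _)

theorem isBilinearMap_cross3 : IsBilinearMap ℝ cross3 := by
  constructor <;> intros <;> simp [cross3_eq_toLp_crossProduct]

noncomputable def cross3L : E3 →L[ℝ] E3 →L[ℝ] E3 :=
  isBilinearMap_cross3.toContinuousBilinearMap

@[simp]
theorem cross3L_apply (u v : E3) : cross3L u v = cross3 u v :=
  isBilinearMap_cross3.toContinuousBilinearMap_apply u v

theorem HasDerivAt.cross3 {a b : ℝ → E3} {a' b' : E3} {x : ℝ}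
    (ha : HasDerivAt a a' x) (hb : HasDerivAt b b' x) :
    HasDerivAt (fun y ↦ cross3 (a y) (b y)) (cross3 (a x) b' + cross3 a' (b x)) x := by
  simpa using cross3L.hasDerivAt_of_bilinear (fun _ ↦ ha) (fun _ ↦ hb)

@[fun_prop]
theorem Continuous.cross3 {a b : ℝ → E3} (ha : Continuous a) (hb : Continuous b) :
    Continuous fun y ↦ cross3 (a y) (b y) := by
  simpa using (cross3L.continuous.comp ha).clm_apply hb

theorem sq_intervalIntegral_le {g : ℝ → ℝ} {a b : ℝ} (hab : a ≤ b) (hg : Continuous g) :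
    (∫ x in a..b, g x) ^ 2 ≤ (b - a) * ∫ x in a..b, g x ^ 2 := by
  rcases hab.eq_or_lt with rfl | hab
  · simp
  have jensen : (⨍ x in a..b, g x) ^ 2 ≤ ⨍ x in a..b, g x ^ 2 :=
    (even_two.convexOn_pow (𝕜 := ℝ)).map_set_average_le (continuousOn_pow 2) isClosed_univ
      (by simp [uIoc_of_le hab.le, hab]) (by simp [uIoc_of_le hab.le])
      (.of_forall fun _ ↦ mem_univ _) hg.integrableOn_uIoc (hg.pow 2).integrableOn_uIoc
  rw [interval_average_eq_div, interval_average_eq_div, div_pow,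
    div_le_div_iff₀ (by positivity) (by linarith)] at jensen
  nlinarith [sub_pos.2 hab]

theorem integral_inner_deriv_eq_deriv_inner {F : Type*} [NormedAddCommGroup F]
    [InnerProductSpace ℝ F] {u u' v v' : ℝ → F} {a b : ℝ}
    (hu : ∀ x, HasDerivAt u (u' x) x) (hv : ∀ x, HasDerivAt v (v' x) x)
    (hu' : Continuous u') (hv' : Continuous v') :
    ∫ x in a..b, ⟪u x, v' x⟫ = ⟪u b, v b⟫ - ⟪u a, v a⟫ - ∫ x in a..b, ⟪u' x, v x⟫ := by
  have hcu : Continuous u := continuous_iff_continuousAt.2 fun x ↦ (hu x).continuousAt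
  have hcv : Continuous v := continuous_iff_continuousAt.2 fun x ↦ (hv x).continuousAt
  have hint₁ : IntervalIntegrable (fun x ↦ ⟪u x, v' x⟫) MeasureTheory.volume a b :=
    (hcu.inner hv').intervalIntegrable a b
  have hint₂ : IntervalIntegrable (fun x ↦ ⟪u' x, v x⟫) MeasureTheory.volume a b :=
    (hu'.inner hcv).intervalIntegrable a b
  rw [eq_sub_iff_add_eq, ← integral_add hint₁ hint₂,
    integral_eq_sub_of_hasDerivAt (fun x _ ↦ (hu x).inner ℝ (hv x)) (hint₁.add hint₂)]

section Poincare

variable {E : Type*} [NormedAddCommGroup E] [NormedSpace ℝ E] [CompleteSpace E]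
  {f f' : ℝ → E} {a b : ℝ}

theorem sq_norm_le_of_hasDerivAt_of_eq_zero (hf : ∀ t, HasDerivAt f (f' t) t)
    (hf' : Continuous f') (ha : f a = 0) {x : ℝ} (hx : x ∈ Icc a b) :
    ‖f x‖ ^ 2 ≤ (b - a) * ∫ t in a..b, ‖f' t‖ ^ 2 := by
  have hfx : f x = ∫ t in a..x, f' t := by
    rw [integral_eq_sub_of_hasDerivAt (fun t _ ↦ hf t) (hf'.intervalIntegrable a x), ha, sub_zero]
  have hnorm : ‖f x‖ ≤ ∫ t in a..b, ‖f' t‖ := calc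
    ‖f x‖ ≤ ∫ t in a..x, ‖f' t‖ := hfx ▸ norm_integral_le_integral_norm hx.1
    _ ≤ ∫ t in a..b, ‖f' t‖ := integral_mono_interval le_rfl hx.1 hx.2
      (.of_forall fun t ↦ norm_nonneg _) (hf'.norm.intervalIntegrable a b)
  calc ‖f x‖ ^ 2 ≤ (∫ t in a..b, ‖f' t‖) ^ 2 := pow_le_pow_left₀ (norm_nonneg _) hnorm 2
    _ ≤ (b - a) * ∫ t in a..b, ‖f' t‖ ^ 2 := sq_intervalIntegral_le (hx.1.trans hx.2) hf'.norm

theorem integral_sq_norm_le_of_hasDerivAt_of_eq_zero (hab : a ≤ b)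
    (hf : ∀ t, HasDerivAt f (f' t) t) (hf' : Continuous f') (ha : f a = 0) :
    ∫ x in a..b, ‖f x‖ ^ 2 ≤ (b - a) ^ 2 * ∫ t in a..b, ‖f' t‖ ^ 2 := by
  have hcf : Continuous f := continuous_iff_continuousAt.2 fun x ↦ (hf x).continuousAt
  calc ∫ x in a..b, ‖f x‖ ^ 2 ≤ ∫ _ in a..b, (b - a) * ∫ t in a..b, ‖f' t‖ ^ 2 :=
        integral_mono_on hab ((by fun_prop : Continuous fun x ↦ ‖f x‖ ^ 2).intervalIntegrable _ _)
          intervalIntegrable_const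
          fun x hx ↦ sq_norm_le_of_hasDerivAt_of_eq_zero hf hf' ha hx
    _ = (b - a) ^ 2 * ∫ t in a..b, ‖f' t‖ ^ 2 := by
        rw [integral_const, smul_eq_mul]; ring

end Poincare

theorem integral_mul_le_young {u v : ℝ → ℝ} {a b ε : ℝ} (hab : a ≤ b) (hε : 0 < ε)
    (hu : Continuous u) (hv : Continuous v) :
    ∫ x in a..b, u x * v x
      ≤ ε / 2 * (∫ x in a..b, u x ^ 2) + (2 * ε)⁻¹ * ∫ x in a..b, v x ^ 2 := by
  have young (x : ℝ) : u x * v x ≤ ε / 2 * u x ^ 2 + (2 * ε)⁻¹ * v x ^ 2 := by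
    have h : ε / 2 * u x ^ 2 + (2 * ε)⁻¹ * v x ^ 2 - u x * v x
        = (ε * u x - v x) ^ 2 / (2 * ε) := by
      field_simp; ring
    linarith [show 0 ≤ (ε * u x - v x) ^ 2 / (2 * ε) by positivity]
  rw [← integral_const_mul, ← integral_const_mul,
    ← integral_add (Continuous.intervalIntegrable (by fun_prop) _ _)
      (Continuous.intervalIntegrable (by fun_prop) _ _)]
  exact integral_mono_on hab (Continuous.intervalIntegrable (by fun_prop) _ _)
    (Continuous.intervalIntegrable (by fun_prop) _ _) fun x _ ↦ young x

theorem hasDerivAt_cross3_deriv {m m' : ℝ → E3} {m'' : E3} {x : ℝ}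
    (hm : HasDerivAt m (m' x) x) (hm' : HasDerivAt m' m'' x) :
    HasDerivAt (fun y ↦ cross3 (m y) (m' y)) (cross3 (m x) m'') x := by
  simpa using hm.cross3 hm'

theorem integral_inner_cross3_eq_neg {m m' m'' : ℝ → E3} {a b : ℝ} (r : E3)
    (hm : ∀ x, HasDerivAt m (m' x) x) (hm' : ∀ x, HasDerivAt m' (m'' x) x)
    (hm'' : Continuous m'') (ha : m' a = 0) (hb : m' b = 0) :
    ∫ x in a..b, ⟪cross3 r (m x), cross3 (m x) (m'' x)⟫
      = -∫ x in a..b, ⟪cross3 r (m' x), cross3 (m x) (m' x)⟫ := by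
  have hcm : Continuous m := continuous_iff_continuousAt.2 fun x ↦ (hm x).continuousAt
  have hcm' : Continuous m' := continuous_iff_continuousAt.2 fun x ↦ (hm' x).continuousAt
  rw [integral_inner_deriv_eq_deriv_inner
    (fun x ↦ by simpa using (hasDerivAt_const x r).cross3 (hm x))
    (fun x ↦ hasDerivAt_cross3_deriv (hm x) (hm' x)) (by fun_prop) (by fun_prop)]
  simp [ha, hb]

theorem neg_integral_inner_cross3_le {v F G : ℝ → E3} {a b : ℝ} {r : E3} (hr : ‖r‖ ≤ 1)
    (hab : a < b) (hv : Continuous v) (hF : ∀ x, HasDerivAt F (G x) x) (hG : Continuous G)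
    (ha : F a = 0) :
    -∫ x in a..b, ⟪cross3 r (v x), F x⟫
      ≤ (b - a) ^ 2 / 2 * (∫ x in a..b, ‖v x‖ ^ 2) + 1 / 2 * ∫ x in a..b, ‖G x‖ ^ 2 := by
  have hcF : Continuous F := continuous_iff_continuousAt.2 fun x ↦ (hF x).continuousAt
  have pointwise : ∫ x in a..b, -⟪cross3 r (v x), F x⟫ ≤ ∫ x in a..b, ‖v x‖ * ‖F x‖ := by
    refine integral_mono_on hab.le (Continuous.intervalIntegrable (by fun_prop) _ _)
      (Continuous.intervalIntegrable (by fun_prop) _ _) fun x _ ↦ (neg_le_abs _).trans ?_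
    exact (abs_inner_cross3_le r (v x) (F x)).trans (mul_le_of_le_one_left (by positivity) hr)
  have young := integral_mul_le_young hab.le (pow_pos (sub_pos.2 hab) 2) hv.norm hcF.norm
  have poincare := integral_sq_norm_le_of_hasDerivAt_of_eq_zero hab.le hF hG ha
  rw [← integral_neg]
  calc _ ≤ (b - a) ^ 2 / 2 * (∫ x in a..b, ‖v x‖ ^ 2)
          + (2 * (b - a) ^ 2)⁻¹ * ((b - a) ^ 2 * ∫ x in a..b, ‖G x‖ ^ 2) := by
        grw [pointwise, young, poincare]
    _ = _ := by
        field_simp [(sub_pos.2 hab).ne']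

/-- For `r ∈ ℝ³` with `‖r‖ = 1` and `m : [0,L] → ℝ³` twice continuously
differentiable with `m'(0) = m'(L) = 0`, the cross-term estimate
`∫₀ᴸ (r × m)·(m × m'') dx ≤ 2L² ∫₀ᴸ ‖m'‖² dx + (1/2) ∫₀ᴸ ‖m × m''‖² dx` holds. -/
theorem cross_term_estimate
    (L : ℝ) (hL : 0 < L)
    (r : EuclideanSpace ℝ (Fin 3)) (hr : ‖r‖ = 1)
    (m : ℝ → EuclideanSpace ℝ (Fin 3)) (hm : ContDiff ℝ 2 m)
    (hb0 : deriv m 0 = 0) (hbL : deriv m L = 0) :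
    ∫ x in (0 : ℝ)..L, ⟪cross3 r (m x), cross3 (m x) (deriv (deriv m) x)⟫
      ≤ 2 * L ^ 2 * (∫ x in (0 : ℝ)..L, ‖deriv m x‖ ^ 2)
        + (1 / 2) * ∫ x in (0 : ℝ)..L, ‖cross3 (m x) (deriv (deriv m) x)‖ ^ 2 := by
  have hm₁ : ContDiff ℝ 1 (deriv m) := (contDiff_succ_iff_deriv.mp (by exact_mod_cast hm)).2.2
  have hm' (x : ℝ) : HasDerivAt m (deriv m x) x :=
    (hm.differentiable two_ne_zero x).hasDerivAt
  have hm'' (x : ℝ) : HasDerivAt (deriv m) (deriv (deriv m) x) x :=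
    (hm₁.differentiable one_ne_zero x).hasDerivAt
  have hcm'' : Continuous (deriv (deriv m)) := hm₁.continuous_deriv le_rfl
  have bound := neg_integral_inner_cross3_le hr.le hL hm₁.continuous
    (fun x ↦ hasDerivAt_cross3_deriv (hm' x) (hm'' x)) (by fun_prop) (by simp [hb0])
  have hA : 0 ≤ ∫ x in (0 : ℝ)..L, ‖deriv m x‖ ^ 2 :=
    integral_nonneg hL.le fun _ _ ↦ sq_nonneg _
  rw [integral_inner_cross3_eq_neg r hm' hm'' hcm'' hb0 hbL]
  rw [sub_zero] at bound
  nlinarith [mul_nonneg (sq_nonneg L) hA]
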